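/- arXiv:2601.17960 — 2 statements merged into one kernel-verified Lean document; each statement's English description precedes it below -/
import Mathlib

section
/- Let C, C' be finite types and d, d' finite types (dimensions), and let N : (C → Matrix d d ℂ) →ₗ[ℂ] (C' → Matrix d' d' ℂ) be a linear map such that (i) whenever ρ c is positive semidefinite for every c, (N ρ) c' is positive semidefinite for every c', and (ii) ∑ c', ((N ρ) c').trace = ∑ c, (ρ c).trace for every ρ. Then for every family ρ : C → Matrix d d ℂ with every ρ c Hermitian, ∑ c', ‖(N ρ) c'‖₁ ≤ ∑ c, ‖ρ c‖₁. -/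
/-!
Split each Hermitian `ρ c` into its positive and negative parts, `ρ c = ρ⁺ - ρ⁻`, so that
`‖ρ c‖₁ = tr ρ⁺ + tr ρ⁻`. Since `N` is positive and preserves the total trace, it then suffices
that `‖P - Q‖₁ ≤ tr P + tr Q` for positive `P, Q`. With `S = sign (P - Q)` one has
`|P - Q| = S (P - Q)` and `-1 ≤ S ≤ 1`, and `tr (X Y) ≥ 0` for positive `X, Y` gives
`tr (S P) ≤ tr P` and `-tr (S Q) ≤ tr Q`.
-/

open scoped ComplexOrder

/-- The trace norm `‖A‖₁` of a complex matrix `A`: the trace of the positive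
semidefinite square root of `Aᴴ * A`. -/
noncomputable def traceNorm {n : Type*} [Fintype n] [DecidableEq n] (A : Matrix n n ℂ) : ℝ :=
  (((Matrix.posSemidef_conjTranspose_mul_self A).1.eigenvectorUnitary : Matrix n n ℂ) *
    Matrix.diagonal (((↑) : ℝ → ℂ) ∘ (Real.sqrt ·) ∘ (Matrix.posSemidef_conjTranspose_mul_self A).1.eigenvalues) *
    (star (Matrix.posSemidef_conjTranspose_mul_self A).1.eigenvectorUnitary : Matrix n n ℂ)).trace.re

open scoped MatrixOrder

namespace Matrix

variable {n 𝕜 : Type*} [Fintype n] [DecidableEq n] [RCLike 𝕜]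

lemma trace_mul_nonneg {X Y : Matrix n n 𝕜} (hX : 0 ≤ X) (hY : 0 ≤ Y) : 0 ≤ (X * Y).trace := by
  have hXY : (X * Y).trace = (CFC.sqrt X * Y * CFC.sqrt X).trace := by
    conv_lhs => rw [← CFC.sqrt_mul_sqrt_self X hX]
    rw [mul_assoc, trace_mul_comm, mul_assoc]
  rw [hXY]
  exact (nonneg_iff_posSemidef.mp <| conjugate_nonneg_of_nonneg hY (CFC.sqrt_nonneg X)).trace_nonneg

lemma trace_mul_le_trace {S X : Matrix n n 𝕜} (hS : S ≤ 1) (hX : 0 ≤ X) :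
    (S * X).trace ≤ X.trace := by
  have := trace_mul_nonneg (sub_nonneg.mpr hS) hX
  rwa [sub_mul, one_mul, trace_sub, sub_nonneg] at this

lemma trace_abs_sub_le {P Q : Matrix n n 𝕜} (hP : 0 ≤ P) (hQ : 0 ≤ Q) :
    (CFC.abs (P - Q)).trace ≤ P.trace + Q.trace := by
  have hA : IsSelfAdjoint (P - Q) := hP.isSelfAdjoint.sub hQ.isSelfAdjoint
  set S := cfc (fun x : ℝ => (SignType.sign x : ℝ)) (P - Q)
  -- the spectrum is finite, so the discontinuous `sign` is admissible in the functional calculus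
  have hSA : CFC.abs (P - Q) = S * (P - Q) := by
    conv_rhs => rw [← cfc_id' ℝ (P - Q)]
    rw [CFC.abs_eq_cfc_norm _ hA, ← cfc_mul _ _ _ ((P - Q).finite_real_spectrum.continuousOn _)]
    simp [sign_mul_self]
  have hS : S ≤ 1 := cfc_le_one _ _ fun x _ => by cases SignType.sign x <;> simp
  have hnegS : -S ≤ 1 := by
    rw [← cfc_neg]
    exact cfc_le_one _ _ fun x _ => by cases SignType.sign x <;> simp
  calc (CFC.abs (P - Q)).trace = (S * P).trace + (-S * Q).trace := by
        rw [hSA, mul_sub, trace_sub, neg_mul, trace_neg, sub_eq_add_neg]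
    _ ≤ P.trace + Q.trace := add_le_add (trace_mul_le_trace hS hP) (trace_mul_le_trace hnegS hQ)

end Matrix

open Matrix

section

variable {n : Type*} [Fintype n] [DecidableEq n]

lemma traceNorm_eq_re_trace_abs (A : Matrix n n ℂ) : traceNorm A = (CFC.abs A).trace.re := by
  have hB := posSemidef_conjTranspose_mul_self A
  change (hB.1.cfc Real.sqrt).trace.re = _
  rw [← hB.1.cfc_eq, CFC.abs, star_eq_conjTranspose, CFC.sqrt_eq_real_sqrt _ hB.nonneg, cfcₙ_eq_cfc]

lemma traceNorm_eq_re_trace_posPart_add_negPart {A : Matrix n n ℂ} (hA : A.IsHermitian) :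
    traceNorm A = (A⁺).trace.re + (A⁻).trace.re := by
  rw [traceNorm_eq_re_trace_abs, ← CFC.posPart_add_negPart A hA, trace_add, Complex.add_re]

lemma traceNorm_sub_le {P Q : Matrix n n ℂ} (hP : 0 ≤ P) (hQ : 0 ≤ Q) :
    traceNorm (P - Q) ≤ P.trace.re + Q.trace.re := by
  rw [traceNorm_eq_re_trace_abs, ← Complex.add_re]
  exact Complex.re_le_re (trace_abs_sub_le hP hQ)

end

/-- cq-family version of trace-norm contractivity under positive trace-preserving maps:
if `N` maps positive cq families to positive cq families and preserves the total trace,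
then it does not increase the trace distance functional `∑ c, ‖· c‖₁` on Hermitian
cq families. -/
theorem cq_traceNorm_le_of_positive_tracePreserving
    {C C' d d' : Type*} [Fintype C] [Fintype C']
    [Fintype d] [DecidableEq d] [Fintype d'] [DecidableEq d']
    (N : (C → Matrix d d ℂ) →ₗ[ℂ] (C' → Matrix d' d' ℂ))
    (hpos : ∀ ρ : C → Matrix d d ℂ, (∀ c, (ρ c).PosSemidef) → ∀ c', ((N ρ) c').PosSemidef)
    (htr : ∀ ρ : C → Matrix d d ℂ, ∑ c', ((N ρ) c').trace = ∑ c, (ρ c).trace)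
    (ρ : C → Matrix d d ℂ) (hherm : ∀ c, (ρ c).IsHermitian) :
    ∑ c', traceNorm ((N ρ) c') ≤ ∑ c, traceNorm (ρ c) := by
  set P : C → Matrix d d ℂ := fun c => (ρ c)⁺
  set Q : C → Matrix d d ℂ := fun c => (ρ c)⁻
  have hρ : ρ = P - Q := funext fun c => (CFC.posPart_sub_negPart (ρ c) (hherm c)).symm
  have hNP c' : 0 ≤ N P c' :=
    nonneg_iff_posSemidef.mpr <| hpos P (fun c => (CFC.posPart_nonneg _).posSemidef) c'
  have hNQ c' : 0 ≤ N Q c' :=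
    nonneg_iff_posSemidef.mpr <| hpos Q (fun c => (CFC.negPart_nonneg _).posSemidef) c'
  calc ∑ c', traceNorm (N ρ c')
      ≤ ∑ c', ((N P c').trace.re + (N Q c').trace.re) := by
        rw [hρ, map_sub]
        exact Finset.sum_le_sum fun c' _ => traceNorm_sub_le (hNP c') (hNQ c')
    _ = (∑ c, (P c).trace).re + (∑ c, (Q c).trace).re := by
        rw [Finset.sum_add_distrib, ← Complex.re_sum, ← Complex.re_sum, htr, htr]
    _ = ∑ c, traceNorm (ρ c) := by
        simp only [Complex.re_sum, ← Finset.sum_add_distrib, P, Q,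
          traceNorm_eq_re_trace_posPart_add_negPart (hherm _)]
end

section
/- Fix L : ℕ, a finite type C and a finite dimension type d, and let R be the ideal map on families ρ : K × K × C → Matrix d d ℂ. Let Ω ⊆ C and suppose that for every c ∉ Ω and every (k_A, k_B) ≠ (⊥, ⊥) one has ρ(k_A, k_B, c) = 0. Then: (i) (R ρ)(k_A, k_B, c) = ρ(k_A, k_B, c) for every c ∉ Ω and every (k_A, k_B); and (ii) ∑ over all (k_A, k_B, c) of ‖ρ(k_A, k_B, c) − (R ρ)(k_A, k_B, c)‖₁ equals ∑ over (k_A, k_B) and c ∈ Ω of ‖ρ(k_A, k_B, c) − (R ρ)(k_A, k_B, c)‖₁. -/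
open scoped ComplexOrder

/-- The key alphabet: keys of length `l ≤ L`, i.e. pairs of a length `l : Fin (L+1)`
and a bitstring of that length. -/
abbrev Key (L : ℕ) := Σ l : Fin (L+1), (Fin (l : ℕ) → Bool)

/-- The length of a key. -/
def lenKey {L : ℕ} (k : Key L) : Fin (L+1) := k.1

/-- The unique key of length `0` (the abort symbol `⊥`). -/
def botKey (L : ℕ) : Key L := ⟨0, fun _ => false⟩

/-- The ideal-key weight `w(k_A, k_B)`: `2^(-len k_A)` if the lengths agree and
`k_A = k_B`, `0` if the lengths agree but `k_A ≠ k_B`, and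
`2^(-(len k_A + len k_B))` if the lengths differ. -/
noncomputable def idealWt {L : ℕ} (kA kB : Key L) : ℝ :=
  if lenKey kA = lenKey kB then
    (if kA = kB then (2:ℝ) ^ (-((lenKey kA : ℕ) : ℤ)) else 0)
  else (2:ℝ) ^ (-(((lenKey kA : ℕ) : ℤ) + ((lenKey kB : ℕ) : ℤ)))

/-- The ideal map `R`, acting per value of the additional classical index `c`:
it replaces the key registers by ideal keys, weighting by `idealWt` and summing the
input state over all key pairs with the same pair of lengths. -/
noncomputable def idealMap {L : ℕ} {C d : Type*}
    (ρ : Key L × Key L × C → Matrix d d ℂ) : Key L × Key L × C → Matrix d d ℂ :=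
  fun p => idealWt p.1 p.2.1 •
    ∑ q : Key L × Key L,
      if lenKey q.1 = lenKey p.1 ∧ lenKey q.2 = lenKey p.2.1
        then ρ (q.1, q.2, p.2.2) else 0

theorem lenKey_botKey (L : ℕ) : lenKey (botKey L) = 0 := rfl

theorem lenKey_eq_zero_iff {L : ℕ} {k : Key L} : lenKey k = 0 ↔ k = botKey L := by
  refine ⟨fun hk => ?_, fun hk => hk ▸ rfl⟩
  obtain ⟨l, s⟩ := k
  obtain rfl : l = 0 := hk
  exact congrArg _ (funext fun i => i.elim0)

theorem idealWt_botKey (L : ℕ) : idealWt (botKey L) (botKey L) = 1 := by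
  simp [idealWt, botKey, lenKey]

theorem idealMap_eq_self_of_supported_botKey {L : ℕ} {C d : Type*}
    (ρ : Key L × Key L × C → Matrix d d ℂ) (c : C)
    (hρ : ∀ kA kB : Key L, (kA, kB) ≠ (botKey L, botKey L) → ρ (kA, kB, c) = 0)
    (kA kB : Key L) : idealMap ρ (kA, kB, c) = ρ (kA, kB, c) := by
  -- `(⊥, ⊥)` is the only key pair of lengths `(0, 0)`, so it is alone in its length class.
  have hsum : (∑ q : Key L × Key L,
      if lenKey q.1 = lenKey kA ∧ lenKey q.2 = lenKey kB then ρ (q.1, q.2, c) else 0) =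
      if (kA, kB) = (botKey L, botKey L) then ρ (botKey L, botKey L, c) else 0 := by
    rw [Fintype.sum_eq_single (botKey L, botKey L) fun q hq => by
      simp [hρ q.1 q.2 hq]]
    simp only [lenKey_botKey, eq_comm (a := (0 : Fin (L + 1))), lenKey_eq_zero_iff,
      Prod.mk.injEq]
  by_cases hbot : (kA, kB) = (botKey L, botKey L)
  · obtain ⟨rfl, rfl⟩ := Prod.mk.inj hbot
    simp [idealMap, hsum, idealWt_botKey]
  · simp [idealMap, hsum, hbot, hρ kA kB hbot]

theorem traceNorm_zero {n : Type*} [Fintype n] [DecidableEq n] :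
    traceNorm (0 : Matrix n n ℂ) = 0 := by
  have hev := (Matrix.IsHermitian.eigenvalues_eq_zero_iff
    (Matrix.posSemidef_conjTranspose_mul_self (0 : Matrix n n ℂ)).1).mpr (by simp)
  simp [traceNorm, hev]

theorem Fintype.sum_prod_prod_eq_sum_filter {α β γ M : Type*} [Fintype α] [Fintype β]
    [Fintype γ] [AddCommMonoid M] (s : Set γ) [DecidablePred (· ∈ s)]
    (f : α × β × γ → M) (hf : ∀ a b c, c ∉ s → f (a, b, c) = 0) :
    ∑ p, f p = ∑ q : α × β, ∑ c ∈ Finset.univ.filter (· ∈ s), f (q.1, q.2, c) := by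
  rw [← Fintype.sum_equiv (Equiv.prodAssoc α β γ) _ _ fun _ => rfl, Fintype.sum_prod_type]
  refine Finset.sum_congr rfl fun q _ => (Finset.sum_filter_of_ne fun c _ hc => ?_).symm
  by_contra hcs
  exact hc (hf q.1 q.2 c hcs)

/-- If outside the event `Ω` both parties hold the abort key `⊥`, then (i) the real and
ideal states agree outside `Ω`, and (ii) the real–ideal trace distance reduces to the
partial states on `Ω`. -/
theorem idealMap_eq_off_event_and_traceDist (L : ℕ) (C d : Type*) [Fintype C]
    [Fintype d] [DecidableEq d] (Ω : Set C) [DecidablePred (· ∈ Ω)]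
    (ρ : Key L × Key L × C → Matrix d d ℂ)
    (h : ∀ (kA kB : Key L) (c : C), c ∉ Ω → (kA, kB) ≠ (botKey L, botKey L) →
        ρ (kA, kB, c) = 0) :
    (∀ (kA kB : Key L) (c : C), c ∉ Ω → idealMap ρ (kA, kB, c) = ρ (kA, kB, c)) ∧
    (∑ p : Key L × Key L × C, traceNorm (ρ p - idealMap ρ p) =
      ∑ q : Key L × Key L, ∑ c ∈ Finset.univ.filter (· ∈ Ω),
        traceNorm (ρ (q.1, q.2, c) - idealMap ρ (q.1, q.2, c))) := by
  have hoff : ∀ (kA kB : Key L) (c : C), c ∉ Ω → idealMap ρ (kA, kB, c) = ρ (kA, kB, c) :=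
    fun kA kB c hc => idealMap_eq_self_of_supported_botKey ρ c (fun kA kB => h kA kB c hc) kA kB
  refine ⟨hoff, Fintype.sum_prod_prod_eq_sum_filter Ω _ fun kA kB c hc => ?_⟩
  rw [hoff kA kB c hc, sub_self, traceNorm_zero]
end
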